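/- arXiv:1612.02845 — 3 statements merged into one kernel-verified Lean document; each statement's English description precedes it below -/
import Mathlib

section
/- Let ℓ be a prime and let R be a commutative ring which is a ℤ_ℓ-algebra, free of rank 2 as a ℤ_ℓ-module, and reduced (equivalently, R is an order in a reduced quadratic ℚ_ℓ-algebra). Then there exist ω ∈ R and c, d ∈ ℤ_ℓ such that (1, ω) is a ℤ_ℓ-basis of R, ω² = c·ω + d·1, and one of the following holds: c = 0 and d ≠ 0; or ℓ = 2, c = 1, and d is either zero or a unit of ℤ₂. -/
/-!
Over the local ring `ℤ_ℓ`, `1` can be completed to a basis `(1, ω)`, and then `ω² = c ω + d`.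
Substituting `u ω + t` for `ω`, with `u` a unit, keeps `(1, ω)` a basis and turns `(c, d)` into
`(u c + 2 t, u² d - u c t - t²)`. If `2 ∣ c`, completing the square gives `c = 0`, and `d ≠ 0`
because otherwise `ω` would be nilpotent. Otherwise `2` is not a unit, so `ℓ = 2` and `c` is a
unit; dividing by `c` gives `c = 1` when `d` is odd, while for even `d` Hensel's lemma provides a
root of `X² - c X - d`, and translating `ω` by it makes `ω` (up to a unit) idempotent.
-/

open Module Polynomial

namespace Module.Basis

section

variable {ι A M : Type*} [Fintype ι] [DecidableEq ι] [CommRing A] [AddCommGroup M] [Module A M]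

theorem det_update_self (e : Basis ι A M) (i : ι) (x : M) :
    e.det (Function.update e i x) = e.repr x i := by
  rw [e.det_apply, e.toMatrix_update, e.toMatrix_self, ← Matrix.cramer_apply, Matrix.cramer_one]
  rfl

theorem exists_coe_eq_update_of_isUnit_repr (e : Basis ι A M) {i : ι} {x : M}
    (hx : IsUnit (e.repr x i)) : ∃ e' : Basis ι A M, ⇑e' = Function.update e i x := by
  obtain ⟨hli, hspan⟩ := (e.is_basis_iff_det).2 (e.det_update_self i x ▸ hx)
  exact ⟨Basis.mk hli hspan.ge, Basis.coe_mk _ _⟩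

end

section IsLocalRing

variable {ι A R : Type*} [Fintype ι] [CommRing A] [IsLocalRing A] [CommRing R] [Algebra A R]

/-- If all coordinates of `1` lie in the maximal ideal, so would all coordinates of every
`x = x * 1`, in particular the coordinate `1` of a basis vector. -/
theorem exists_isUnit_repr_one (e : Basis ι A R) [Nonempty ι] :
    ∃ i, IsUnit (e.repr 1 i) := by
  by_contra! h
  obtain ⟨j⟩ := ‹Nonempty ι›
  have hmem : e.repr (e j) j ∈ IsLocalRing.maximalIdeal A := by
    have hej : e j = ∑ i, e.repr 1 i • (e j * e i) := by
      conv_lhs => rw [← mul_one (e j), ← e.sum_repr 1, Finset.mul_sum]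
      simp_rw [mul_smul_comm]
    rw [hej, map_sum, Finsupp.finsetSum_apply]
    refine Ideal.sum_mem _ fun i _ => ?_
    rw [map_smul, Finsupp.smul_apply, smul_eq_mul]
    exact Ideal.mul_mem_right _ _ ((IsLocalRing.mem_maximalIdeal _).2 (h i))
  simp at hmem

theorem exists_basis_apply_eq_one (e : Basis ι A R) (i₀ : ι) :
    ∃ e' : Basis ι A R, e' i₀ = 1 := by
  classical
  have : Nonempty ι := ⟨i₀⟩
  obtain ⟨i, hi⟩ := e.exists_isUnit_repr_one
  obtain ⟨e', he'⟩ := e.exists_coe_eq_update_of_isUnit_repr hi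
  exact ⟨e'.reindex (Equiv.swap i i₀), by simp [he']⟩

end IsLocalRing

end Module.Basis

section QuadraticBasis

variable {A R : Type*} [CommRing A] [CommRing R] [Algebra A R]

variable (A) in
def IsQuadraticBasis (ω : R) (c d : A) : Prop :=
  ∃ B : Basis (Fin 2) A R,
    B 0 = 1 ∧ B 1 = ω ∧ ω ^ 2 = algebraMap A R c * ω + algebraMap A R d

theorem exists_isQuadraticBasis [IsLocalRing A] [Module.Free A R] (hrank : finrank A R = 2) :
    ∃ (ω : R) (c d : A), IsQuadraticBasis A ω c d := by
  have : Module.Finite A R := Module.finite_of_finrank_pos (by omega)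
  obtain ⟨B, hB0⟩ := (Module.finBasisOfFinrankEq A R hrank).exists_basis_apply_eq_one 0
  refine ⟨B 1, B.repr (B 1 ^ 2) 1, B.repr (B 1 ^ 2) 0, B, hB0, rfl, ?_⟩
  conv_lhs => rw [← B.sum_repr (B 1 ^ 2), Fin.sum_univ_two, hB0]
  rw [Algebra.smul_def, Algebra.smul_def, mul_one, add_comm]

namespace IsQuadraticBasis

variable {ω : R} {c d : A}

theorem affine (h : IsQuadraticBasis A ω c d) (u : Aˣ) (t : A) {c' d' : A}
    (hc' : c' = u * c + 2 * t) (hd' : d' = u ^ 2 * d - u * c * t - t ^ 2) :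
    IsQuadraticBasis A (algebraMap A R u * ω + algebraMap A R t) c' d' := by
  obtain ⟨B, hB0, hB1, hsq⟩ := h
  have hrepr : B.repr (algebraMap A R u * ω + algebraMap A R t) 1 = u := by
    rw [← hB1, ← Algebra.smul_def, ← mul_one (algebraMap A R t), ← Algebra.smul_def, ← hB0]
    simp
  obtain ⟨B', hB'⟩ := B.exists_coe_eq_update_of_isUnit_repr (hrepr ▸ u.isUnit)
  refine ⟨B', by simp [hB', hB0], by simp [hB'], ?_⟩
  subst hc' hd'
  simp only [map_add, map_sub, map_mul, map_pow, map_ofNat]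
  linear_combination algebraMap A R u ^ 2 * hsq

theorem ne_zero [Nontrivial A] [IsReduced R] (h : IsQuadraticBasis A ω 0 d) : d ≠ 0 := by
  obtain ⟨B, -, hB1, hsq⟩ := h
  rintro rfl
  rw [map_zero, zero_mul, add_zero] at hsq
  exact B.ne_zero 1 (hB1 ▸ IsReduced.eq_zero ω ⟨2, hsq⟩)

theorem exists_of_two_dvd (h : IsQuadraticBasis A ω c d) (hc : 2 ∣ c) :
    ∃ (ω' : R) (d' : A), IsQuadraticBasis A ω' 0 d' := by
  obtain ⟨t, rfl⟩ := hc
  exact ⟨_, _, h.affine 1 (-t) (by simp) rfl⟩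

theorem exists_of_isUnit (h : IsQuadraticBasis A ω c d) (hc : IsUnit c) (hd : IsUnit d) :
    ∃ (ω' : R) (d' : A), IsQuadraticBasis A ω' 1 d' ∧ IsUnit d' := by
  obtain ⟨u, rfl⟩ := hc
  refine ⟨_, _, h.affine u⁻¹ 0 (by simp) rfl, ?_⟩
  simpa using (u⁻¹.isUnit.pow 2).mul hd

/-- A root `r` of `X² - c X - d` with `c - 2 r` a unit makes `(ω - r) / (c - 2 r)` idempotent. -/
theorem exists_idempotent (h : IsQuadraticBasis A ω c d) {r : A} (hr : r ^ 2 = c * r + d)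
    (hs : IsUnit (c - 2 * r)) : ∃ ω' : R, IsQuadraticBasis A ω' 1 0 := by
  obtain ⟨s, hs⟩ := hs
  refine ⟨_, h.affine s⁻¹ (-(↑s⁻¹ * r)) ?_ ?_⟩
  · rw [← Units.inv_mul s, hs]; ring
  · linear_combination (↑s⁻¹ : A) ^ 2 * hr

end IsQuadraticBasis

end QuadraticBasis

namespace PadicInt

variable {p : ℕ} [Fact p.Prime]

theorem isUnit_iff_not_dvd {x : ℤ_[p]} : IsUnit x ↔ ¬(p : ℤ_[p]) ∣ x := by
  rw [← not_iff_not, not_not, not_isUnit_iff, norm_lt_one_iff_dvd]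

theorem eq_two_of_not_isUnit_two (h : ¬IsUnit (2 : ℤ_[p])) : p = 2 := by
  rw [not_isUnit_iff, ← Nat.cast_ofNat, norm_natCast_lt_one_iff] at h
  exact (Nat.prime_dvd_prime_iff_eq Fact.out Nat.prime_two).1 h

/-- Hensel's lemma for `X² - c X - d` at `0`, where the derivative `-c` is a unit. -/
theorem exists_sq_eq_mul_add {c d : ℤ_[p]} (hc : IsUnit c) (hd : ¬IsUnit d) :
    ∃ r : ℤ_[p], r ^ 2 = c * r + d ∧ IsUnit (c - 2 * r) := by
  set F : ℤ_[p][X] := X ^ 2 - C c * X - C d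
  have hnorm : ‖F.aeval (0 : ℤ_[p])‖ < ‖(derivative F).aeval (0 : ℤ_[p])‖ ^ 2 := by
    simpa [F, isUnit_iff.1 hc] using not_isUnit_iff.1 hd
  obtain ⟨r, hr, -, hr', -⟩ := hensels_lemma hnorm
  refine ⟨r, by simpa [F, sub_eq_zero, sub_sub] using hr, ?_⟩
  rw [isUnit_iff, norm_sub_rev]
  simpa [F, isUnit_iff.1 hc, one_add_one_eq_two] using hr'

end PadicInt

/-- classification of quadratic rings over `ℤ_p`: every reduced quadratic
ring over `ℤ_p` has a basis `(1, ω)` with `ω² = c·ω + d·1` and normalized parameters. -/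
theorem quadratic_ring_normalized_basis
    (p : ℕ) [Fact p.Prime] (R : Type*) [CommRing R] [Algebra ℤ_[p] R]
    [Module.Free ℤ_[p] R] (hrank : Module.finrank ℤ_[p] R = 2) [IsReduced R] :
    ∃ (ω : R) (c d : ℤ_[p]) (B : Module.Basis (Fin 2) ℤ_[p] R),
      B 0 = 1 ∧ B 1 = ω ∧
      ω ^ 2 = algebraMap ℤ_[p] R c * ω + algebraMap ℤ_[p] R d ∧
      ((c = 0 ∧ d ≠ 0) ∨ (p = 2 ∧ c = 1 ∧ (d = 0 ∨ IsUnit d))) := by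
  suffices ∃ (ω : R) (c d : ℤ_[p]), IsQuadraticBasis ℤ_[p] ω c d ∧
      ((c = 0 ∧ d ≠ 0) ∨ (p = 2 ∧ c = 1 ∧ (d = 0 ∨ IsUnit d))) by
    obtain ⟨ω, c, d, ⟨B, hB0, hB1, hsq⟩, hcd⟩ := this
    exact ⟨ω, c, d, B, hB0, hB1, hsq, hcd⟩
  obtain ⟨ω, c, d, h⟩ := exists_isQuadraticBasis hrank
  by_cases hc : 2 ∣ c
  · obtain ⟨ω', d', h'⟩ := h.exists_of_two_dvd hc
    exact ⟨ω', 0, d', h', Or.inl ⟨rfl, h'.ne_zero⟩⟩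
  obtain rfl : p = 2 := PadicInt.eq_two_of_not_isUnit_two fun h2 => hc h2.dvd
  have hcu : IsUnit c := PadicInt.isUnit_iff_not_dvd.2 (by simpa using hc)
  by_cases hd : IsUnit d
  · obtain ⟨ω', d', h', hd'⟩ := h.exists_of_isUnit hcu hd
    exact ⟨ω', 1, d', h', Or.inr ⟨rfl, rfl, Or.inr hd'⟩⟩
  · obtain ⟨r, hr, hs⟩ := PadicInt.exists_sq_eq_mul_add hcu hd
    obtain ⟨ω', h'⟩ := h.exists_idempotent hr hs
    exact ⟨ω', 1, 0, h', Or.inr ⟨rfl, rfl, Or.inl rfl⟩⟩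
end

section
/- Let ℓ be a prime, let C = C(c,d) be a Cartan subgroup of GL₂(ℤ_ℓ) with normalized parameters (c,d), and let N be its normalizer in GL₂(ℤ_ℓ). Then N ∖ C is exactly the set of matrices of the form [[z, −dw + cz], [w, −z]] with z, w ∈ ℤ_ℓ and v_ℓ(−z² + dw² − czw) = 0. Moreover, every M ∈ N ∖ C satisfies: M ≢ I (mod ℓ) if ℓ is odd; M ≢ I (mod 4) if ℓ = 2; and M ≢ I (mod 2) if ℓ = 2 and c = 1. -/
open Matrix Polynomial

/-- Reduction modulo `p^n` on `GL₂(ℤ_p)`. -/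
noncomputable def redGL (p : ℕ) [Fact p.Prime] (n : ℕ) :
    GL (Fin 2) ℤ_[p] →* GL (Fin 2) (ZMod (p ^ n)) :=
  Matrix.GeneralLinearGroup.map (PadicInt.toZModPow n)

/-- `M ≡ I (mod p^k)`. -/
def modI {p : ℕ} [Fact p.Prime] (k : ℕ) (M : GL (Fin 2) ℤ_[p]) : Prop :=
  ∀ i j, ((p : ℤ_[p]) ^ k) ∣ (((M : Matrix (Fin 2) (Fin 2) ℤ_[p]) - 1) i j)

/-- `v_p x = k`, expressed through divisibility (in particular `x ≠ 0`). -/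
def valEq {p : ℕ} [Fact p.Prime] (x : ℤ_[p]) (k : ℕ) : Prop :=
  ((p : ℤ_[p]) ^ k ∣ x) ∧ ¬ ((p : ℤ_[p]) ^ (k + 1) ∣ x)

/-- Condition `E(a,b)`. -/
def CondE {p : ℕ} [Fact p.Prime] (a b : ℕ) (M : GL (Fin 2) ℤ_[p]) : Prop :=
  modI a M ∧ ¬ modI (a + 1) M ∧
    valEq (((M : Matrix (Fin 2) (Fin 2) ℤ_[p]) - 1).det) (2 * a + b)

/-- `𝓜_{a,b}(G)`. -/
def Mset {p : ℕ} [Fact p.Prime] (G : Subgroup (GL (Fin 2) ℤ_[p])) (a b : ℕ) :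
    Set (GL (Fin 2) ℤ_[p]) :=
  {M | M ∈ G ∧ CondE a b M}

/-- `μ_{a,b}(G)`. -/
noncomputable def mu (p : ℕ) [Fact p.Prime] (G : Subgroup (GL (Fin 2) ℤ_[p])) (a b : ℕ) : ℚ :=
  ((redGL p (a + b + 1) '' Mset G a b).ncard : ℚ) /
    ((redGL p (a + b + 1) '' (G : Set (GL (Fin 2) ℤ_[p]))).ncard : ℚ)

/-- `G` is open in `GL₂(ℤ_p)`. -/
def IsOpenSub {p : ℕ} [Fact p.Prime] (G : Subgroup (GL (Fin 2) ℤ_[p])) : Prop :=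
  ∃ m : ℕ, 1 ≤ m ∧ ∀ M : GL (Fin 2) ℤ_[p], modI m M → M ∈ G

/-- The underlying set of the Cartan subgroup `C(c,d)`. -/
def CartanSet {p : ℕ} [Fact p.Prime] (c d : ℤ_[p]) : Set (GL (Fin 2) ℤ_[p]) :=
  {M | ∃ x y : ℤ_[p], (M : Matrix (Fin 2) (Fin 2) ℤ_[p]) = !![x, d * y; y, x + c * y]}

/-- `C` is the Cartan subgroup with parameters `(c,d)`. -/
def IsCartan {p : ℕ} [Fact p.Prime] (c d : ℤ_[p]) (C : Subgroup (GL (Fin 2) ℤ_[p])) : Prop :=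
  (C : Set (GL (Fin 2) ℤ_[p])) = CartanSet c d

/-- `(c,d)` are normalized parameters. -/
def NormalizedParams (p : ℕ) [Fact p.Prime] (c d : ℤ_[p]) : Prop :=
  (c = 0 ∧ d ≠ 0) ∨ (p = 2 ∧ c = 1 ∧ (d = 0 ∨ IsUnit d))

/-- `(c,d)` are parameters of a split Cartan subgroup. -/
def SplitParams (p : ℕ) [Fact p.Prime] (c d : ℤ_[p]) : Prop :=
  (Odd p ∧ c = 0 ∧ ∃ u : ℤ_[p], IsUnit u ∧ d = u ^ 2) ∨ (p = 2 ∧ c = 1 ∧ d = 0)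

/-- `(c,d)` are parameters of a nonsplit Cartan subgroup. -/
def NonsplitParams (p : ℕ) [Fact p.Prime] (c d : ℤ_[p]) : Prop :=
  (Odd p ∧ c = 0 ∧ IsUnit d ∧ ¬ IsSquare d) ∨ (p = 2 ∧ c = 1 ∧ IsUnit d)

/-!
Write `φ = !![0, d; 1, c]`, so that `φ² = c φ + d` and `C(c,d)` is the unit group of `ℤ_ℓ[φ]`,
i.e. the invertible matrices commuting with `φ`. If `M` normalizes `C`, conjugating the element
`1 - ℓ φ` of `C` shows that `ψ = M φ M⁻¹` commutes with `φ`, so `ψ = a + b φ`. Since `ψ` has the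
trace `c` and determinant `-d` of `φ`, and the discriminant `c² + 4d` is nonzero for normalized
parameters, `ψ` is `φ` or its conjugate `c - φ`. The first case means `M ∈ C`; the second is exactly
the stated shape of `M`, and conversely such an `M` maps the commutant of `φ` onto that of `c - φ`,
which is the same. A matrix of that shape has trace `0`, so `M - 1` has trace `-2`, which rules out
`M ≡ 1` modulo an odd `ℓ` or modulo `4`; for `c = 1` the entries of `M - 1` even generate the unit
ideal.
-/

theorem SemiconjBy.commute_of_isUnit {M : Type*} [Monoid M] {a x y x' y' : M} (ha : IsUnit a)
    (h : SemiconjBy a x y) (h' : SemiconjBy a x' y') (hx : Commute x x') : Commute y y' := by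
  obtain ⟨u, rfl⟩ := ha
  refine (Units.mul_left_inj u).mp ?_
  rw [← (h.mul_right h').eq, ← (h'.mul_right h).eq, hx.eq]

theorem SemiconjBy.commute_iff_of_isUnit {M : Type*} [Monoid M] {a x y x' y' : M} (ha : IsUnit a)
    (h : SemiconjBy a x y) (h' : SemiconjBy a x' y') : Commute y y' ↔ Commute x x' := by
  obtain ⟨u, rfl⟩ := ha
  exact ⟨h.units_inv_symm_left.commute_of_isUnit (u⁻¹).isUnit h'.units_inv_symm_left,
    h.commute_of_isUnit u.isUnit h'⟩

section Algebra

variable {R A : Type*} [CommRing R] [Ring A] [Algebra R A]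

theorem commute_smul_one_sub_iff (c : R) (x y : A) : Commute x (c • 1 - y) ↔ Commute x y := by
  have hc : Commute x (c • 1) := (Commute.one_right x).smul_right c
  exact ⟨fun h => by simpa using hc.sub_right h, hc.sub_right⟩

theorem Commute.of_one_sub_smul_left [IsDomain R] [Module.IsTorsionFree R A] {t : R} (ht : t ≠ 0)
    {x y : A} (h : Commute (1 - t • x) y) : Commute x y := by
  have htx : Commute (t • x) y := by simpa using (Commute.one_left y).sub_left h
  exact smul_right_injective A ht (by simpa [Commute, SemiconjBy] using htx.eq)

end Algebra

section CartanGenerator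

variable {R : Type*} [CommRing R]

def cartanGen (c d : R) : Matrix (Fin 2) (Fin 2) R := !![0, d; 1, c]

theorem commute_cartanGen_iff (c d : R) (N : Matrix (Fin 2) (Fin 2) R) :
    Commute N (cartanGen c d) ↔ ∃ x y, N = !![x, d * y; y, x + c * y] := by
  constructor
  · intro h
    have h01 : N 0 1 = d * N 1 0 := by
      simpa [cartanGen, mul_apply, Fin.sum_univ_two] using congrFun₂ h.eq 0 0
    have h11 : N 1 1 = N 0 0 + c * N 1 0 := by
      simpa [cartanGen, mul_apply, Fin.sum_univ_two] using congrFun₂ h.eq 1 0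
    exact ⟨N 0 0, N 1 0, (eta_fin_two N).trans (by rw [h01, h11])⟩
  · rintro ⟨x, y, rfl⟩
    ext i j
    fin_cases i <;> fin_cases j <;> simp [cartanGen, mul_apply, Fin.sum_univ_two] <;> ring

theorem semiconjBy_cartanGen_iff (c d : R) (N : Matrix (Fin 2) (Fin 2) R) :
    SemiconjBy N (cartanGen c d) (c • 1 - cartanGen c d) ↔
      ∃ z w, N = !![z, -d * w + c * z; w, -z] := by
  constructor
  · intro h
    have h01 : N 0 1 = c * N 0 0 + -(d * N 1 0) := by
      simpa [cartanGen, mul_apply, Fin.sum_univ_two] using congrFun₂ h.eq 0 0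
    have h11 : N 1 1 = -N 0 0 := by
      simpa [cartanGen, mul_apply, Fin.sum_univ_two] using congrFun₂ h.eq 1 0
    exact ⟨N 0 0, N 1 0, (eta_fin_two N).trans (by rw [h01, h11]; ring_nf)⟩
  · rintro ⟨z, w, rfl⟩
    ext i j
    fin_cases i <;> fin_cases j <;>
      simp [cartanGen, mul_apply, Fin.sum_univ_two] <;> ring

theorem eq_cartanGen_or_eq_smul_one_sub_of_commute [IsDomain R] {c d : R} (h2 : (2 : R) ≠ 0)
    (hdisc : c ^ 2 + 4 * d ≠ 0) {N : Matrix (Fin 2) (Fin 2) R} (hN : Commute N (cartanGen c d))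
    (htr : N.trace = (cartanGen c d).trace) (hdet : N.det = (cartanGen c d).det) :
    N = cartanGen c d ∨ N = c • 1 - cartanGen c d := by
  obtain ⟨a, b, rfl⟩ := (commute_cartanGen_iff c d N).mp hN
  simp only [cartanGen, trace_fin_two_of, det_fin_two_of] at htr hdet
  have hb : (c ^ 2 + 4 * d) * ((b - 1) * (b + 1)) = 0 := by
    linear_combination (2 * a + c * b + c) * htr - 4 * hdet
  rcases mul_eq_zero.mp ((mul_eq_zero.mp hb).resolve_left hdisc) with hb | hb
  · obtain rfl : b = 1 := by linear_combination hb
    obtain rfl : a = 0 := (mul_eq_zero.mp (by linear_combination htr : 2 * a = 0)).resolve_left h2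
    left
    ext i j
    fin_cases i <;> fin_cases j <;> simp [cartanGen]
  · obtain rfl : b = -1 := by linear_combination hb
    obtain rfl : a = c := sub_eq_zero.mp
      ((mul_eq_zero.mp (by linear_combination htr : 2 * (a - c) = 0)).resolve_left h2)
    right
    ext i j
    fin_cases i <;> fin_cases j <;> simp [cartanGen]

theorem not_commute_of_semiconjBy_cartanGen {c d : R} (h2 : (2 : R) ≠ 0)
    {N : Matrix (Fin 2) (Fin 2) R} (hN : IsUnit N)
    (h : SemiconjBy N (cartanGen c d) (c • 1 - cartanGen c d)) : ¬ Commute N (cartanGen c d) := by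
  intro hc
  have h0 : (c • 1 - cartanGen c d - cartanGen c d) * N = 0 := by
    rw [sub_mul, ← h.eq, ← hc.eq, sub_self]
  have h10 : (-1 - 1 : R) = 0 := by
    simpa [cartanGen] using congrFun₂ (hN.mul_left_eq_zero.mp h0) 1 0
  exact h2 (by linear_combination -h10)

theorem dvd_two_of_forall_dvd_sub_one {m z b w : R}
    (h : ∀ i j, m ∣ (!![z, b; w, -z] - 1 : Matrix (Fin 2) (Fin 2) R) i j) : m ∣ 2 := by
  have h00 : m ∣ z - 1 := by simpa using h 0 0
  have h11 : m ∣ -z - 1 := by simpa using h 1 1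
  exact dvd_neg.mp (by convert h00.add h11 using 1; ring)

theorem dvd_one_of_forall_dvd_sub_one {m z w d : R}
    (h : ∀ i j, m ∣ (!![z, -d * w + z; w, -z] - 1 : Matrix (Fin 2) (Fin 2) R) i j) : m ∣ 1 := by
  have h00 : m ∣ z - 1 := by simpa using h 0 0
  have h01 : m ∣ -d * w + z := by simpa using h 0 1
  have h10 : m ∣ w := by simpa using h 1 0
  convert (h01.add (h10.mul_left d)).sub h00 using 1
  ring

end CartanGenerator

namespace PadicInt

variable {p : ℕ} [Fact p.Prime]

theorem not_two_dvd_one : ¬ (2 : ℤ_[2]) ∣ 1 := by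
  exact_mod_cast (prime_p (p := 2)).not_dvd_one

theorem not_four_dvd_two : ¬ (4 : ℤ_[2]) ∣ 2 := by
  have h : ¬ (2 * 2 : ℤ_[2]) ∣ 2 * 1 := by
    rw [mul_dvd_mul_iff_left two_ne_zero]
    exact not_two_dvd_one
  norm_num at h
  exact h

theorem not_dvd_two_of_odd (hp : Odd p) : ¬ (p : ℤ_[p]) ∣ 2 := by
  intro h
  have hint : (p : ℤ) ∣ 2 := by
    rw [← norm_int_lt_one_iff_dvd, Int.cast_ofNat]
    exact (norm_lt_one_iff_dvd _).mpr h
  have hp2 : p = 2 :=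
    (Nat.prime_dvd_prime_iff_eq Fact.out Nat.prime_two).mp (by exact_mod_cast hint)
  exact (Nat.not_even_iff_odd.mpr hp) (hp2 ▸ even_two)

theorem isUnit_one_sub_p_smul (N : Matrix (Fin 2) (Fin 2) ℤ_[p]) :
    IsUnit (1 - (p : ℤ_[p]) • N) := by
  rw [isUnit_iff_isUnit_det]
  have hdet : (1 - (p : ℤ_[p]) • N).det = 1 - p * (N 0 0 + N 1 1 - p * N.det) := by
    rw [det_fin_two, det_fin_two]
    simp only [Matrix.sub_apply, Matrix.smul_apply, smul_eq_mul, one_apply_eq, one_apply_ne zero_ne_one,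
      one_apply_ne one_ne_zero]
    ring
  rw [hdet]
  exact IsLocalRing.isUnit_one_sub_self_of_mem_nonunits _
    (mem_nonunits.mpr ((norm_lt_one_iff_dvd _).mpr (dvd_mul_right _ _)))

end PadicInt

section Cartan

variable {p : ℕ} [Fact p.Prime] {c d : ℤ_[p]} {C : Subgroup (GL (Fin 2) ℤ_[p])}

theorem NormalizedParams.sq_add_four_mul_ne_zero (hcd : NormalizedParams p c d) :
    c ^ 2 + 4 * d ≠ 0 := by
  rcases hcd with ⟨rfl, hd⟩ | ⟨rfl, rfl, -⟩
  · simpa using hd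
  · intro h
    exact PadicInt.not_two_dvd_one ⟨-2 * d, by linear_combination h⟩

theorem IsCartan.mem_iff_commute (hC : IsCartan c d C) (M : GL (Fin 2) ℤ_[p]) :
    M ∈ C ↔ Commute (M : Matrix (Fin 2) (Fin 2) ℤ_[p]) (cartanGen c d) := by
  rw [commute_cartanGen_iff, ← SetLike.mem_coe, hC]
  rfl

theorem IsCartan.commute_conj_of_mem_normalizer (hC : IsCartan c d C) {M : GL (Fin 2) ℤ_[p]}
    (hM : M ∈ Subgroup.normalizer (C : Set (GL (Fin 2) ℤ_[p]))) :
    Commute ((M : Matrix (Fin 2) (Fin 2) ℤ_[p]) * cartanGen c d *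
      ((M⁻¹ : GL (Fin 2) ℤ_[p]) : Matrix (Fin 2) (Fin 2) ℤ_[p])) (cartanGen c d) := by
  set g : GL (Fin 2) ℤ_[p] := (PadicInt.isUnit_one_sub_p_smul (cartanGen c d)).unit
  have hg : g ∈ C :=
    (hC.mem_iff_commute g).mpr ((Commute.one_left _).sub_left ((Commute.refl _).smul_left _))
  have hconj := (hC.mem_iff_commute _).mp ((Subgroup.mem_normalizer_iff.mp hM g).mp hg)
  have hval : ((M * g * M⁻¹ : GL (Fin 2) ℤ_[p]) : Matrix (Fin 2) (Fin 2) ℤ_[p]) =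
      1 - (p : ℤ_[p]) • ((M : Matrix (Fin 2) (Fin 2) ℤ_[p]) * cartanGen c d *
        ((M⁻¹ : GL (Fin 2) ℤ_[p]) : Matrix (Fin 2) (Fin 2) ℤ_[p])) := by
    simp [g, mul_sub, sub_mul]
  rw [hval] at hconj
  exact hconj.of_one_sub_smul_left (PadicInt.prime_p (p := p)).ne_zero

theorem IsCartan.mem_normalizer_of_semiconjBy (hC : IsCartan c d C) {M : GL (Fin 2) ℤ_[p]}
    (hM : SemiconjBy (M : Matrix (Fin 2) (Fin 2) ℤ_[p]) (cartanGen c d) (c • 1 - cartanGen c d)) :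
    M ∈ Subgroup.normalizer (C : Set (GL (Fin 2) ℤ_[p])) := by
  refine Subgroup.mem_normalizer_iff.mpr fun h => ?_
  rw [hC.mem_iff_commute, hC.mem_iff_commute, Units.val_mul, Units.val_mul]
  exact ((Units.mk_semiconjBy M h).commute_iff_of_isUnit M.isUnit hM).symm.trans
    (commute_smul_one_sub_iff c _ _)

theorem IsCartan.mem_normalizer_and_not_mem_iff_semiconjBy (hC : IsCartan c d C)
    (hcd : NormalizedParams p c d) (M : GL (Fin 2) ℤ_[p]) :
    (M ∈ Subgroup.normalizer (C : Set (GL (Fin 2) ℤ_[p])) ∧ M ∉ C) ↔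
      SemiconjBy (M : Matrix (Fin 2) (Fin 2) ℤ_[p]) (cartanGen c d) (c • 1 - cartanGen c d) := by
  refine ⟨fun ⟨hN, hMC⟩ => ?_, fun hM => ⟨hC.mem_normalizer_of_semiconjBy hM, fun hMC =>
    not_commute_of_semiconjBy_cartanGen two_ne_zero M.isUnit hM ((hC.mem_iff_commute M).mp hMC)⟩⟩
  rcases eq_cartanGen_or_eq_smul_one_sub_of_commute two_ne_zero hcd.sq_add_four_mul_ne_zero
      (hC.commute_conj_of_mem_normalizer hN) (trace_units_conj M _) (det_units_conj M _) with h | h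
  · exact absurd ((hC.mem_iff_commute M).mpr ((Units.mul_inv_eq_iff_eq_mul M).mp h)) hMC
  · exact (Units.mul_inv_eq_iff_eq_mul M).mp h

theorem IsCartan.mem_normalizer_and_not_mem_iff (hC : IsCartan c d C)
    (hcd : NormalizedParams p c d) (M : GL (Fin 2) ℤ_[p]) :
    (M ∈ Subgroup.normalizer (C : Set (GL (Fin 2) ℤ_[p])) ∧ M ∉ C) ↔
      ∃ z w : ℤ_[p], (M : Matrix (Fin 2) (Fin 2) ℤ_[p]) = !![z, -d * w + c * z; w, -z] ∧
        IsUnit (-z ^ 2 + d * w ^ 2 - c * z * w) := by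
  rw [hC.mem_normalizer_and_not_mem_iff_semiconjBy hcd, semiconjBy_cartanGen_iff]
  refine exists₂_congr fun z w => ⟨fun hM => ⟨hM, ?_⟩, And.left⟩
  have hdet := isUnits_det_units M
  rwa [hM, det_fin_two_of,
    show z * -z - (-d * w + c * z) * w = -z ^ 2 + d * w ^ 2 - c * z * w by ring] at hdet

end Cartan

/-- description of `N ∖ C` and non-congruence properties of its elements. -/
theorem normalizer_sdiff_cartan_description
    (p : ℕ) [Fact p.Prime] (c d : ℤ_[p]) (C : Subgroup (GL (Fin 2) ℤ_[p]))
    (hC : IsCartan c d C) (hcd : NormalizedParams p c d) :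
    (∀ M : GL (Fin 2) ℤ_[p],
      (M ∈ Subgroup.normalizer (C : Set (GL (Fin 2) ℤ_[p])) ∧ M ∉ C) ↔
        ∃ z w : ℤ_[p],
          (M : Matrix (Fin 2) (Fin 2) ℤ_[p]) = !![z, -d * w + c * z; w, -z] ∧
          IsUnit (-z ^ 2 + d * w ^ 2 - c * z * w)) ∧
    (∀ M : GL (Fin 2) ℤ_[p], M ∈ Subgroup.normalizer (C : Set (GL (Fin 2) ℤ_[p])) → M ∉ C →
      (Odd p → ¬ modI 1 M) ∧
      (p = 2 → ¬ ∀ i j, (4 : ℤ_[p]) ∣ ((M : Matrix (Fin 2) (Fin 2) ℤ_[p]) - 1) i j) ∧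
      (p = 2 → c = 1 → ¬ ∀ i j, (2 : ℤ_[p]) ∣ ((M : Matrix (Fin 2) (Fin 2) ℤ_[p]) - 1) i j)) := by
  refine ⟨hC.mem_normalizer_and_not_mem_iff hcd, fun M hN hMC => ?_⟩
  obtain ⟨z, w, hM, -⟩ := (hC.mem_normalizer_and_not_mem_iff hcd M).mp ⟨hN, hMC⟩
  simp only [modI, pow_one, hM]
  refine ⟨fun hp hmod => ?_, fun hp hmod => ?_, fun hp hc hmod => ?_⟩
  · exact PadicInt.not_dvd_two_of_odd hp (dvd_two_of_forall_dvd_sub_one hmod)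
  · subst hp
    exact PadicInt.not_four_dvd_two (dvd_two_of_forall_dvd_sub_one hmod)
  · subst hp hc
    simp only [one_mul] at hmod
    exact PadicInt.not_two_dvd_one (dvd_one_of_forall_dvd_sub_one hmod)
end

section
/- Fix integers a, b ≥ 0. For n ≥ 1 let H_{a,b}(n) be the set of M ∈ GL₂(ℤ/ℓⁿℤ) such that: M ≡ I (mod ℓ^{min(a,n)}); if n > a then M ≢ I (mod ℓ^{a+1}); if a < n ≤ a + b then every matrix M̃ ∈ Mat₂(ℤ_ℓ) reducing to M modulo ℓⁿ satisfies v_ℓ(det(M̃ − I)) ≥ a + n; and if n > a + b then every such lift M̃ satisfies v_ℓ(det(M̃ − I)) = 2a + b. Then for every n ≥ 1 and every M ∈ H_{a,b}(n), the number of M' ∈ H_{a,b}(n+1) reducing to M modulo ℓⁿ equals f(n), where f(n) = 1 if n < a; f(n) = (ℓ² − 1)(ℓ² − ℓ) if n = a and b = 0; f(n) = (ℓ + 1)(ℓ² − 1) if n = a and b > 0; f(n) = ℓ³ if a < n < a + b; f(n) = ℓ⁴ − ℓ³ if n = a + b and b > 0; and f(n) = ℓ⁴ if n > a + b. -/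
/-!
Fix a `p`-adic lift `M̃` of `M`. The lifts of `M` to level `n + 1` are exactly the reductions of
`M̃ + pⁿ B̃`, one for each `B ∈ Mat₂(𝔽_p)`. Membership in `H_{a,b}(N)` can be read on any single
lift `X` at level `N > a`, because changing `X` by `p^N D` changes `det (X - 1)` by a multiple of
`p^(a+N)`.

For `n > a` write `M̃ - 1 = p^a A` with `A ≢ 0 (mod p)`. Then
`det (M̃ + pⁿ B̃ - 1) ≡ det (M̃ - 1) + p^(a+n) ⟨A, B⟩ (mod p^(a+n+1))`, where `⟨A, B⟩` is the
polarization of `det`, a nonzero linear form in `B`. So the new condition on `B` is empty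
(`n > a + b`), an affine hyperplane (`n < a + b`) or its complement (`n = a + b`). For `n = a` we
have `M = 1`, the lift is `1 + pⁿ B̃` with `B ≠ 0`, and its determinant `p^(2n) det B̃` forces `B`
invertible (`b = 0`) or singular (`b > 0`). For `n < a` the only lift is `1`.
-/

open Matrix Polynomial

/-- Reduction `GL₂(ℤ/p^{n+1}) → GL₂(ℤ/p^n)`. -/
noncomputable def castGL (p : ℕ) [Fact p.Prime] (n : ℕ) :
    GL (Fin 2) (ZMod (p ^ (n + 1))) →* GL (Fin 2) (ZMod (p ^ n)) :=
  Matrix.GeneralLinearGroup.map (ZMod.castHom (pow_dvd_pow p (Nat.le_succ n)) (ZMod (p ^ n)))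
/-- The set `H_{a,b}(n) ⊆ GL₂(ℤ/ℓⁿℤ)`. -/
def Hset (p : ℕ) [Fact p.Prime] (a b n : ℕ) : Set (GL (Fin 2) (ZMod (p ^ n))) :=
  {M | (∀ i j, ((p : ZMod (p ^ n)) ^ min a n) ∣
          ((M : Matrix (Fin 2) (Fin 2) (ZMod (p ^ n))) - 1) i j)
    ∧ (a < n → ¬ ∀ i j, ((p : ZMod (p ^ n)) ^ (a + 1)) ∣
          ((M : Matrix (Fin 2) (Fin 2) (ZMod (p ^ n))) - 1) i j)
    ∧ (a < n → n ≤ a + b → ∀ Mt : Matrix (Fin 2) (Fin 2) ℤ_[p],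
        Mt.map (PadicInt.toZModPow n) = (M : Matrix (Fin 2) (Fin 2) (ZMod (p ^ n))) →
        (p : ℤ_[p]) ^ (a + n) ∣ (Mt - 1).det)
    ∧ (a + b < n → ∀ Mt : Matrix (Fin 2) (Fin 2) ℤ_[p],
        Mt.map (PadicInt.toZModPow n) = (M : Matrix (Fin 2) (Fin 2) (ZMod (p ^ n))) →
        valEq (Mt - 1).det (2 * a + b))}

/-- The number `f(n)` of lifts. -/
def liftCount (p a b n : ℕ) : ℕ :=
  if n < a then 1
  else if n = a then (if b = 0 then (p ^ 2 - 1) * (p ^ 2 - p) else (p + 1) * (p ^ 2 - 1))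
  else if n < a + b then p ^ 3
  else if n = a + b then p ^ 4 - p ^ 3
  else p ^ 4


open PadicInt

local notation "Mat₂" => Matrix (Fin 2) (Fin 2)

namespace Matrix

variable {R S : Type*} [CommRing R] [CommRing S]

theorem exists_eq_smul_iff_forall_dvd {m n : Type*} {c : R} {U : Matrix m n R} :
    (∃ A, U = c • A) ↔ ∀ i j, c ∣ U i j := by
  refine ⟨fun ⟨A, hA⟩ i j => ⟨A i j, by simp [hA]⟩, fun h => ?_⟩
  choose A hA using h
  exact ⟨of A, by ext i j; simp [hA]⟩

theorem map_eq_map_iff_exists_eq_add_smul {m n : Type*} {f : R →+* S} {c : R}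
    (hf : ∀ x, f x = 0 ↔ c ∣ x) {X Y : Matrix m n R} :
    X.map f = Y.map f ↔ ∃ D, X = Y + c • D := by
  constructor
  · intro h
    have hdvd (i j) : c ∣ (X - Y) i j := by
      rw [← hf, sub_apply, map_sub, sub_eq_zero]
      exact congr_fun (congr_fun h i) j
    obtain ⟨D, hD⟩ := exists_eq_smul_iff_forall_dvd.mpr hdvd
    exact ⟨D, by rw [← hD, add_sub_cancel]⟩
  · rintro ⟨D, rfl⟩
    ext i j
    simp [(hf c).mpr dvd_rfl]

theorem dvd_add_smul_apply_iff {m n : Type*} {c d : R} (hcd : c ∣ d) (X V : Matrix m n R)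
    (i : m) (j : n) : c ∣ (X + d • V) i j ↔ c ∣ X i j := by
  rw [add_apply, smul_apply, smul_eq_mul]
  exact dvd_add_left (hcd.mul_right _)

def detPolar : Mat₂ R →ₗ[R] Mat₂ R →ₗ[R] R :=
  LinearMap.mk₂ R (fun A B => A 0 0 * B 1 1 + A 1 1 * B 0 0 - A 0 1 * B 1 0 - A 1 0 * B 0 1)
    (fun _ _ _ => by simp only [add_apply]; ring)
    (fun _ _ _ => by simp only [smul_apply, smul_eq_mul]; ring)
    (fun _ _ _ => by simp only [add_apply]; ring)
    (fun _ _ _ => by simp only [smul_apply, smul_eq_mul]; ring)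

theorem det_add_fin_two (A B : Mat₂ R) : (A + B).det = A.det + detPolar A B + B.det := by
  simp [det_fin_two, detPolar]
  ring

theorem det_add_smul_fin_two (A B : Mat₂ R) (c : R) :
    (A + c • B).det = A.det + c * detPolar A B + c ^ 2 * B.det := by
  rw [det_add_fin_two, map_smul, smul_eq_mul, det_smul, Fintype.card_fin]

theorem map_detPolar (f : R →+* S) (A B : Mat₂ R) :
    f (detPolar A B) = detPolar (A.map f) (B.map f) := by
  simp [detPolar]

theorem detPolar_ne_zero {A : Mat₂ R} (hA : A ≠ 0) : detPolar A ≠ 0 := by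
  contrapose! hA
  have h (B : Mat₂ R) : detPolar A B = 0 := by rw [hA]; rfl
  ext i j
  fin_cases i <;> fin_cases j
  · simpa [detPolar] using h (single 1 1 1)
  · simpa [detPolar] using h (single 1 0 (-1))
  · simpa [detPolar] using h (single 0 1 (-1))
  · simpa [detPolar] using h (single 0 0 1)

theorem mul_dvd_det_add_smul_sub_det {c d : R} {U : Mat₂ R} (hU : ∀ i j, c ∣ U i j)
    (hcd : c ∣ d) (V : Mat₂ R) : c * d ∣ (U + d • V).det - U.det := by
  obtain ⟨A, rfl⟩ := exists_eq_smul_iff_forall_dvd.mpr hU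
  rw [det_add_smul_fin_two, map_smul, LinearMap.smul_apply, smul_eq_mul]
  have hd2 : c * d ∣ d ^ 2 := by rw [sq]; exact mul_dvd_mul_right hcd d
  rw [add_assoc, add_sub_cancel_left]
  exact dvd_add ⟨detPolar A V, by ring⟩ (hd2.mul_right _)

theorem det_add_pow_smul_eq {π δ : R} {a n : ℕ} (han : a ≤ n) {U A : Mat₂ R}
    (hA : U = π ^ a • A) (hδ : U.det = π ^ (a + n) * δ) (V : Mat₂ R) :
    (U + π ^ n • V).det = π ^ (a + n) * (δ + detPolar A V + π ^ (n - a) * V.det) := by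
  rw [det_add_smul_fin_two, hδ, hA, map_smul, LinearMap.smul_apply, smul_eq_mul]
  obtain ⟨k, rfl⟩ := Nat.exists_eq_add_of_le han
  rw [Nat.add_sub_cancel_left]
  ring

end Matrix

section FiniteField

variable {K : Type*} [Field K] [Fintype K]

theorem LinearMap.ncard_fiber_of_ne_zero {V : Type*} [AddCommGroup V] [Module K V] [Finite V]
    {f : V →ₗ[K] K} (hf : f ≠ 0) (r : K) :
    {v | f v = r}.ncard = Fintype.card K ^ (Module.finrank K V - 1) := by
  obtain ⟨v₀, hv₀⟩ := LinearMap.surjective hf r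
  have hfiber : {v | f v = r} = (v₀ + ·) '' (LinearMap.ker f : Set V) := by
    ext v
    refine ⟨fun hv => ⟨v - v₀, by simp_all, by simp⟩, ?_⟩
    rintro ⟨k, hk, rfl⟩
    simp_all
  rw [hfiber, Set.ncard_image_of_injective _ (add_right_injective v₀), ← Nat.card_coe_set_eq,
    SetLike.coe_sort_coe, Module.natCard_eq_pow_finrank (K := K), Nat.card_eq_fintype_card,
    ← Module.Dual.finrank_ker_add_one_of_ne_zero hf, Nat.add_sub_cancel]

theorem LinearMap.ncard_fiber_compl_of_ne_zero {V : Type*} [AddCommGroup V] [Module K V]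
    [Finite V] {f : V →ₗ[K] K} (hf : f ≠ 0) (r : K) :
    {v | f v ≠ r}.ncard =
      Fintype.card K ^ Module.finrank K V - Fintype.card K ^ (Module.finrank K V - 1) := by
  rw [← ncard_fiber_of_ne_zero hf r, ← Nat.card_eq_fintype_card,
    ← Module.natCard_eq_pow_finrank, ← Set.ncard_compl, Set.compl_ofPred]

theorem Matrix.ncard_det_ne_zero (n : ℕ) :
    {A : Matrix (Fin n) (Fin n) K | A.det ≠ 0}.ncard =
      ∏ i : Fin n, (Fintype.card K ^ n - Fintype.card K ^ (i : ℕ)) := by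
  have hrange : {A : Matrix (Fin n) (Fin n) K | A.det ≠ 0} = Set.range Units.val := by
    ext A
    rw [Set.mem_ofPred_eq, ← isUnit_iff_ne_zero, ← Matrix.isUnit_iff_isUnit_det]
    exact ⟨fun h => ⟨h.unit, rfl⟩, fun ⟨u, hu⟩ => hu ▸ u.isUnit⟩
  rw [hrange, Set.ncard_range_of_injective Units.val_injective, Matrix.card_GL_field]

theorem Matrix.ncard_ne_zero_det_eq_zero :
    {A : Mat₂ K | A ≠ 0 ∧ A.det = 0}.ncard =
      (Fintype.card K + 1) * (Fintype.card K ^ 2 - 1) := by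
  have hsplit : {A : Mat₂ K | A ≠ 0 ∧ A.det = 0} = ({A | A.det ≠ 0} ∪ {0})ᶜ := by
    ext A
    by_cases h : A = 0 <;> simp [h]
  have hdisj : Disjoint {A : Mat₂ K | A.det ≠ 0} {0} := by simp
  have hcard := Set.ncard_compl ({A : Mat₂ K | A.det ≠ 0} ∪ {0})
  rw [Set.ncard_union_eq hdisj, ncard_det_ne_zero, Set.ncard_singleton, Fin.prod_univ_two] at hcard
  rw [hsplit, hcard, Module.natCard_eq_pow_finrank (K := K), Module.finrank_matrix]
  simp only [Fintype.card_fin, Module.finrank_self, Nat.card_eq_fintype_card, Fin.val_zero,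
    Fin.val_one, pow_zero, pow_one]
  have hq : 1 ≤ Fintype.card K := Fintype.card_pos
  generalize Fintype.card K = q at hq ⊢
  have h1 : 1 ≤ q ^ 2 := Nat.one_le_pow _ _ hq
  have h2 : q ≤ q ^ 2 := Nat.le_self_pow two_ne_zero q
  refine Nat.sub_eq_of_eq_add ?_
  zify [h1, h2]
  ring

end FiniteField

namespace PadicInt

variable {p : ℕ} [Fact p.Prime]

theorem toZModPow_eq_zero_iff {n : ℕ} {x : ℤ_[p]} :
    toZModPow n x = 0 ↔ (p : ℤ_[p]) ^ n ∣ x := by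
  rw [← RingHom.mem_ker, ker_toZModPow, Ideal.mem_span_singleton]

theorem toZMod_eq_zero_iff {x : ℤ_[p]} : toZMod x = 0 ↔ (p : ℤ_[p]) ∣ x := by
  rw [← RingHom.mem_ker, ker_toZMod, maximalIdeal_eq_span_p, Ideal.mem_span_singleton]

theorem toZModPow_surjective (n : ℕ) :
    Function.Surjective (toZModPow n : ℤ_[p] → ZMod (p ^ n)) :=
  fun s => ⟨(s.val : ℤ_[p]), by simp⟩

theorem pow_dvd_toZModPow_iff {k n : ℕ} (hk : k ≤ n) (x : ℤ_[p]) :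
    (p : ZMod (p ^ n)) ^ k ∣ toZModPow n x ↔ (p : ℤ_[p]) ^ k ∣ x := by
  refine ⟨fun ⟨y, hy⟩ => ?_, fun h => by simpa using map_dvd (toZModPow n) h⟩
  obtain ⟨Y, rfl⟩ := toZModPow_surjective n y
  have hxY : (p : ℤ_[p]) ^ n ∣ x - p ^ k * Y := toZModPow_eq_zero_iff.mp (by simp [hy])
  exact (dvd_sub_left (dvd_mul_right _ Y)).mp ((pow_dvd_pow _ hk).trans hxY)

theorem isUnit_of_isUnit_toZModPow {n : ℕ} (hn : n ≠ 0) {x : ℤ_[p]}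
    (h : IsUnit (toZModPow n x)) : IsUnit x := by
  have : Fact (1 < p ^ n) := ⟨Nat.one_lt_pow hn (Fact.out : p.Prime).one_lt⟩
  have := IsLocalHom.of_surjective _ (toZModPow_surjective (p := p) n)
  exact (isUnit_map_iff _ _).mp h

theorem pow_succ_dvd_pow_mul_iff {k : ℕ} {x : ℤ_[p]} :
    (p : ℤ_[p]) ^ (k + 1) ∣ p ^ k * x ↔ (p : ℤ_[p]) ∣ x := by
  rw [pow_succ, mul_dvd_mul_iff_left (pow_ne_zero k prime_p.ne_zero)]

section Matrix

variable {m n : Type*}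

noncomputable def liftMat (B : Matrix m n (ZMod p)) : Matrix m n ℤ_[p] :=
  B.map fun b => (b.val : ℤ_[p])

theorem map_toZMod_liftMat (B : Matrix m n (ZMod p)) : (liftMat B).map toZMod = B := by
  ext i j
  simp [liftMat]

theorem map_toZModPow_surjective (N : ℕ) :
    Function.Surjective fun X : Matrix m n ℤ_[p] => X.map (toZModPow N) :=
  fun Z => ⟨Z.map fun s => (s.val : ℤ_[p]), by ext i j; simp⟩

theorem map_toZModPow_eq_iff {N : ℕ} {X Y : Matrix m n ℤ_[p]} :
    X.map (toZModPow N) = Y.map (toZModPow N) ↔ ∃ D, X = Y + (p : ℤ_[p]) ^ N • D :=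
  Matrix.map_eq_map_iff_exists_eq_add_smul fun _ => toZModPow_eq_zero_iff

theorem map_toZMod_eq_iff {X Y : Matrix m n ℤ_[p]} :
    X.map toZMod = Y.map toZMod ↔ ∃ D, X = Y + (p : ℤ_[p]) • D :=
  Matrix.map_eq_map_iff_exists_eq_add_smul fun _ => toZMod_eq_zero_iff

end Matrix

end PadicInt

section Hset

variable {p : ℕ} [Fact p.Prime]

theorem valEq_of_dvd_sub {x y : ℤ_[p]} {k : ℕ} (h : valEq x k)
    (hd : (p : ℤ_[p]) ^ (k + 1) ∣ y - x) : valEq y k :=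
  ⟨(dvd_sub_right ((pow_dvd_pow _ k.le_succ).trans hd)).mp (by simpa using h.1),
    fun hy => h.2 ((dvd_sub_right hy).mp (by simpa using hd))⟩

theorem valEq_pow_mul_iff {k : ℕ} {x : ℤ_[p]} :
    valEq ((p : ℤ_[p]) ^ k * x) k ↔ ¬ (p : ℤ_[p]) ∣ x := by
  simp [valEq, pow_succ_dvd_pow_mul_iff]

def HCond (p : ℕ) [Fact p.Prime] (a b N : ℕ) (X : Mat₂ ℤ_[p]) : Prop :=
  (∀ i j, (p : ℤ_[p]) ^ a ∣ (X - 1) i j) ∧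
    ¬ (∀ i j, (p : ℤ_[p]) ^ (a + 1) ∣ (X - 1) i j) ∧
    (N ≤ a + b → (p : ℤ_[p]) ^ (a + N) ∣ (X - 1).det) ∧
    (a + b < N → valEq (X - 1).det (2 * a + b))

theorem mem_Hset_iff_eq_one {a b N : ℕ} (h : N ≤ a) {M : GL (Fin 2) (ZMod (p ^ N))} :
    M ∈ Hset p a b N ↔ M = 1 := by
  have hpN : (p : ZMod (p ^ N)) ^ N = 0 := by exact_mod_cast ZMod.natCast_self (p ^ N)
  simp only [Hset, Set.mem_ofPred_eq, min_eq_right h, hpN, zero_dvd_iff, show ¬ a < N by omega,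
    show ¬ a + b < N by omega, false_imp_iff, and_true]
  exact ⟨fun h0 => Units.ext (sub_eq_zero.mp (Matrix.ext h0)), fun h1 i j => by simp [h1]⟩

theorem mem_Hset_iff_hCond {a b N : ℕ} (h : a < N) {M : GL (Fin 2) (ZMod (p ^ N))}
    {X : Mat₂ ℤ_[p]} (hX : X.map (toZModPow N) = M) :
    M ∈ Hset p a b N ↔ HCond p a b N X := by
  have hentry {k : ℕ} (hk : k ≤ N) (i j : Fin 2) :
      (p : ZMod (p ^ N)) ^ k ∣ ((M : Mat₂ (ZMod (p ^ N))) - 1) i j ↔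
        (p : ℤ_[p]) ^ k ∣ (X - 1) i j := by
    rw [← hX, ← pow_dvd_toZModPow_iff hk, ← RingHom.mapMatrix_apply,
      ← map_one (toZModPow N).mapMatrix, ← map_sub]
    rfl
  have hlift (ha : ∀ i j, (p : ℤ_[p]) ^ a ∣ (X - 1) i j) (Y : Mat₂ ℤ_[p])
      (hY : Y.map (toZModPow N) = M) : (p : ℤ_[p]) ^ (a + N) ∣ (Y - 1).det - (X - 1).det := by
    obtain ⟨D, rfl⟩ := map_toZModPow_eq_iff.mp (hY.trans hX.symm)
    rw [add_sub_right_comm, pow_add]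
    exact Matrix.mul_dvd_det_add_smul_sub_det ha (pow_dvd_pow _ h.le) D
  simp only [Hset, HCond, Set.mem_ofPred_eq, min_eq_left h.le, hentry h.le, hentry h, h,
    true_imp_iff]
  constructor
  · rintro ⟨h1, h2, h3, h4⟩
    exact ⟨h1, h2, fun hN => h3 hN X hX, fun hN => h4 hN X hX⟩
  · rintro ⟨h1, h2, h3, h4⟩
    refine ⟨h1, h2, fun hN Y hY => ?_, fun hN Y hY => ?_⟩
    · exact (dvd_sub_left (h3 hN)).mp (hlift h1 Y hY)
    · exact valEq_of_dvd_sub (h4 hN) ((pow_dvd_pow _ (by omega)).trans (hlift h1 Y hY))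

end Hset

section Fiber

variable {p : ℕ} [Fact p.Prime]

theorem coe_castGL_of_map_eq {n : ℕ} {g : GL (Fin 2) (ZMod (p ^ (n + 1)))} {X : Mat₂ ℤ_[p]}
    (hX : X.map (toZModPow (n + 1)) = g) :
    (castGL p n g : Mat₂ (ZMod (p ^ n))) = X.map (toZModPow n) := by
  change (g : Mat₂ (ZMod (p ^ (n + 1)))).map _ = _
  rw [← hX, Matrix.map_map]
  congr 1
  funext x
  exact cast_toZModPow n (n + 1) n.le_succ x

theorem ncard_fiber_castGL {n : ℕ} (hn : n ≠ 0) {M : GL (Fin 2) (ZMod (p ^ n))}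
    {Mt : Mat₂ ℤ_[p]} (hMt : Mt.map (toZModPow n) = M)
    {S : Set (GL (Fin 2) (ZMod (p ^ (n + 1))))} {Q : Mat₂ ℤ_[p] → Prop}
    (hSQ : ∀ (M' : GL (Fin 2) (ZMod (p ^ (n + 1)))) X,
      X.map (toZModPow (n + 1)) = (M' : Mat₂ (ZMod (p ^ (n + 1)))) → (M' ∈ S ↔ Q X)) :
    {M' | M' ∈ S ∧ castGL p n M' = M}.ncard =
      {B : Mat₂ (ZMod p) | Q (Mt + (p : ℤ_[p]) ^ n • liftMat B)}.ncard := by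
  set X : Mat₂ (ZMod p) → Mat₂ ℤ_[p] := fun B => Mt + (p : ℤ_[p]) ^ n • liftMat B with hXdef
  have hXn (B) : (X B).map (toZModPow n) = M := (map_toZModPow_eq_iff.mpr ⟨_, rfl⟩).trans hMt
  have hunit (B) : IsUnit ((X B).map (toZModPow (n + 1))) := by
    have hdet : IsUnit (toZModPow n (X B).det) := by
      rw [RingHom.map_det, RingHom.mapMatrix_apply, hXn, ← Matrix.isUnit_iff_isUnit_det]
      exact M.isUnit
    rw [Matrix.isUnit_iff_isUnit_det, ← RingHom.mapMatrix_apply, ← RingHom.map_det]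
    exact (isUnit_of_isUnit_toZModPow hn hdet).map _
  symm
  refine Set.ncard_congr (fun B _ => (hunit B).unit)
    (fun B hB => ⟨(hSQ _ _ (hunit B).unit_spec.symm).mpr hB,
      Units.ext ((coe_castGL_of_map_eq (hunit B).unit_spec.symm).trans (hXn B))⟩) ?_ ?_
  · intro B₁ B₂ _ _ h
    obtain ⟨D, hD⟩ := map_toZModPow_eq_iff.mp (by simpa using congrArg Units.val h)
    have hB : liftMat B₁ = liftMat B₂ + (p : ℤ_[p]) • D := by
      apply smul_right_injective _ (pow_ne_zero n (prime_p (p := p)).ne_zero)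
      simp only [smul_add, smul_smul, ← pow_succ]
      simpa [hXdef, add_assoc] using hD
    rw [← map_toZMod_liftMat B₁, ← map_toZMod_liftMat B₂]
    exact map_toZMod_eq_iff.mpr ⟨D, hB⟩
  · rintro M' ⟨hM'S, hM'M⟩
    obtain ⟨Y, hY⟩ := map_toZModPow_surjective (n + 1) (M' : Mat₂ (ZMod (p ^ (n + 1))))
    have hYn : Y.map (toZModPow n) = Mt.map (toZModPow n) := by
      rw [← coe_castGL_of_map_eq hY, hM'M, hMt]
    obtain ⟨C, rfl⟩ := map_toZModPow_eq_iff.mp hYn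
    obtain ⟨D, hD⟩ := map_toZMod_eq_iff.mp (map_toZMod_liftMat (C.map toZMod))
    have hmap : (X (C.map toZMod)).map (toZModPow (n + 1)) = M' := by
      refine (map_toZModPow_eq_iff.mpr ⟨D, ?_⟩).trans hY
      simp [hXdef, hD, smul_add, smul_smul, pow_succ, add_assoc]
    exact ⟨C.map toZMod, (hSQ M' _ hmap).mp hM'S, Units.ext ((hunit _).unit_spec.trans hmap)⟩

end Fiber

section Lifts

variable {p : ℕ} [Fact p.Prime]

-- `b = 0 ↔ B.det ≠ 0` says: `B` invertible when `b = 0`, singular when `b > 0`.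
theorem hCond_one_add_pow_smul_iff (n b : ℕ) (B : Mat₂ (ZMod p)) :
    HCond p n b (n + 1) (1 + (p : ℤ_[p]) ^ n • liftMat B) ↔ B ≠ 0 ∧ (b = 0 ↔ B.det ≠ 0) := by
  have hdvd_entry (i j) : (p : ℤ_[p]) ∣ liftMat B i j ↔ B i j = 0 := by
    rw [← toZMod_eq_zero_iff]
    simp [liftMat]
  have hdvd_det : (p : ℤ_[p]) ∣ (liftMat B).det ↔ B.det = 0 := by
    rw [← toZMod_eq_zero_iff, RingHom.map_det, RingHom.mapMatrix_apply, map_toZMod_liftMat]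
  have hB0 : (∀ i j, B i j = 0) ↔ B = 0 := ⟨fun h => Matrix.ext h, fun h i j => by simp [h]⟩
  have hdet : ((p : ℤ_[p]) ^ n • liftMat B).det = p ^ (2 * n) * (liftMat B).det := by
    rw [det_smul, Fintype.card_fin, ← pow_mul, mul_comm n 2]
  simp only [HCond, add_sub_cancel_left, hdet, Matrix.smul_apply, smul_eq_mul, dvd_mul_right,
    implies_true, true_and, pow_succ_dvd_pow_mul_iff, hdvd_entry, hB0]
  rw [show n + (n + 1) = 2 * n + 1 by ring, pow_succ_dvd_pow_mul_iff, hdvd_det]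
  rcases Nat.eq_zero_or_pos b with rfl | hb
  · simp [valEq_pow_mul_iff, hdvd_det]
  · simp [hb.ne', show ¬ n + b < n + 1 by omega, show n + 1 ≤ n + b by omega]

-- For `n < a + b` the lifts form an affine hyperplane in `B`, for `n = a + b` its complement.
theorem HCond.exists_succ_iff {a b n : ℕ} (han : a < n) (hnab : n ≤ a + b) {Mt : Mat₂ ℤ_[p]}
    (h : HCond p a b n Mt) :
    ∃ (A : Mat₂ (ZMod p)) (δ : ZMod p), A ≠ 0 ∧ ∀ B,
      HCond p a b (n + 1) (Mt + (p : ℤ_[p]) ^ n • liftMat B) ↔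
        (n < a + b ↔ detPolar A B = δ) := by
  obtain ⟨h1, h2, h3, -⟩ := h
  obtain ⟨A, hA⟩ := Matrix.exists_eq_smul_iff_forall_dvd.mpr h1
  obtain ⟨δ, hδ⟩ := h3 hnab
  refine ⟨A.map toZMod, -toZMod δ, fun h0 => h2 fun i j => ?_, fun B => ?_⟩
  · have hAij : (p : ℤ_[p]) ∣ A i j := toZMod_eq_zero_iff.mp (congr_fun (congr_fun h0 i) j)
    rw [hA, Matrix.smul_apply, smul_eq_mul, pow_succ]
    exact mul_dvd_mul_left _ hAij
  have hkey : (p : ℤ_[p]) ∣ δ + detPolar A (liftMat B) + p ^ (n - a) * (liftMat B).det ↔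
      detPolar (A.map toZMod) B = -toZMod δ := by
    rw [dvd_add_left ((dvd_pow_self _ (by omega)).mul_right _), ← toZMod_eq_zero_iff, map_add,
      map_detPolar, map_toZMod_liftMat, add_comm, add_eq_zero_iff_eq_neg]
  rw [HCond, add_sub_right_comm, Matrix.det_add_pow_smul_eq han.le hA hδ]
  simp only [Matrix.dvd_add_smul_apply_iff (pow_dvd_pow _ han.le),
    Matrix.dvd_add_smul_apply_iff (pow_dvd_pow _ han), h1, h2, implies_true, not_false_eq_true,
    true_and, ← add_assoc a n 1, pow_succ_dvd_pow_mul_iff, hkey]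
  rcases hnab.lt_or_eq with hlt | rfl
  · simp [hlt, Nat.succ_le_of_lt hlt, not_lt.mpr (Nat.succ_le_of_lt hlt)]
  · rw [show 2 * a + b = a + (a + b) by ring, valEq_pow_mul_iff, hkey]
    simp

theorem HCond.succ_of_add_lt {a b n : ℕ} (hab : a + b < n) {Mt : Mat₂ ℤ_[p]}
    (h : HCond p a b n Mt) (V : Mat₂ ℤ_[p]) :
    HCond p a b (n + 1) (Mt + (p : ℤ_[p]) ^ n • V) := by
  obtain ⟨h1, h2, -, h4⟩ := h
  have han : a < n := by omega
  have hdet :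
      (p : ℤ_[p]) ^ (a + n) ∣ (Mt - 1 + (p : ℤ_[p]) ^ n • V).det - (Mt - 1).det := by
    rw [pow_add]
    exact Matrix.mul_dvd_det_add_smul_sub_det h1 (pow_dvd_pow _ han.le) V
  rw [HCond, add_sub_right_comm]
  simp only [Matrix.dvd_add_smul_apply_iff (pow_dvd_pow _ han.le),
    Matrix.dvd_add_smul_apply_iff (pow_dvd_pow _ han), h1, h2]
  refine ⟨fun _ _ => trivial, not_false, fun hN => absurd hN (by omega),
    fun _ => valEq_of_dvd_sub (h4 hab) ((pow_dvd_pow _ (by omega)).trans hdet)⟩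

theorem ncard_hCond_one_add_pow_smul (n b : ℕ) :
    {B : Mat₂ (ZMod p) | HCond p n b (n + 1) (1 + (p : ℤ_[p]) ^ n • liftMat B)}.ncard =
      if b = 0 then (p ^ 2 - 1) * (p ^ 2 - p) else (p + 1) * (p ^ 2 - 1) := by
  simp_rw [hCond_one_add_pow_smul_iff]
  split_ifs with hb
  · have hset :
        {B : Mat₂ (ZMod p) | B ≠ 0 ∧ (b = 0 ↔ B.det ≠ 0)} = {B | B.det ≠ 0} := by
      ext B
      simp only [hb, true_iff, Set.mem_ofPred_eq, and_iff_right_iff_imp]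
      rintro hB rfl
      simp at hB
    rw [hset, Matrix.ncard_det_ne_zero, Fin.prod_univ_two, ZMod.card]
    simp
  · simp only [hb, false_iff, not_not]
    rw [Matrix.ncard_ne_zero_det_eq_zero, ZMod.card]

theorem ncard_hCond_add_pow_smul {a b n : ℕ} (han : a < n) {Mt : Mat₂ ℤ_[p]}
    (h : HCond p a b n Mt) :
    {B : Mat₂ (ZMod p) | HCond p a b (n + 1) (Mt + (p : ℤ_[p]) ^ n • liftMat B)}.ncard =
      if n < a + b then p ^ 3 else if n = a + b then p ^ 4 - p ^ 3 else p ^ 4 := by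
  have hfinrank : Module.finrank (ZMod p) (Mat₂ (ZMod p)) = 4 := by
    simp [Module.finrank_matrix]
  by_cases hab : a + b < n
  · have hall :
        {B : Mat₂ (ZMod p) | HCond p a b (n + 1) (Mt + (p : ℤ_[p]) ^ n • liftMat B)} =
          Set.univ :=
      Set.eq_univ_of_forall fun B => h.succ_of_add_lt hab (liftMat B)
    rw [hall, Set.ncard_univ, Module.natCard_eq_pow_finrank (K := ZMod p), hfinrank,
      Nat.card_zmod, if_neg (by omega), if_neg (by omega)]
  obtain ⟨A, δ, hA, hiff⟩ := h.exists_succ_iff han (not_lt.mp hab)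
  simp_rw [hiff]
  split_ifs with hlt heq
  · simp only [hlt, true_iff]
    rw [LinearMap.ncard_fiber_of_ne_zero (Matrix.detPolar_ne_zero hA), hfinrank, ZMod.card]
  · simp only [heq, lt_irrefl, false_iff]
    rw [LinearMap.ncard_fiber_compl_of_ne_zero (Matrix.detPolar_ne_zero hA), hfinrank,
      ZMod.card]
  · omega

theorem ncard_fiber_Hset_of_lt {a b n : ℕ} (hna : n < a) {M : GL (Fin 2) (ZMod (p ^ n))}
    (hM : M ∈ Hset p a b n) :
    {M' : GL (Fin 2) (ZMod (p ^ (n + 1))) |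
        M' ∈ Hset p a b (n + 1) ∧ castGL p n M' = M}.ncard = 1 := by
  have hfiber : {M' : GL (Fin 2) (ZMod (p ^ (n + 1))) |
      M' ∈ Hset p a b (n + 1) ∧ castGL p n M' = M} = {1} := by
    ext M'
    simp only [Set.mem_ofPred_eq, mem_Hset_iff_eq_one hna, (mem_Hset_iff_eq_one hna.le).mp hM,
      Set.mem_singleton_iff, and_iff_left_iff_imp]
    rintro rfl
    exact map_one _
  rw [hfiber, Set.ncard_singleton]

end Lifts

/-- every `M ∈ H_{a,b}(n)` has exactly `f(n)` lifts in `H_{a,b}(n+1)`. -/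
theorem Hset_lift_count (p : ℕ) [Fact p.Prime] (a b n : ℕ) (hn : 1 ≤ n)
    (M : GL (Fin 2) (ZMod (p ^ n))) (hM : M ∈ Hset p a b n) :
    {M' : GL (Fin 2) (ZMod (p ^ (n + 1))) |
        M' ∈ Hset p a b (n + 1) ∧ castGL p n M' = M}.ncard = liftCount p a b n := by
  rcases lt_trichotomy n a with hna | rfl | han
  · rw [ncard_fiber_Hset_of_lt hna hM]
    simp [liftCount, hna]
  · rw [(mem_Hset_iff_eq_one le_rfl).mp hM,
      ncard_fiber_castGL (by omega) (Mt := 1) (by simp)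
        (fun _ _ hX => mem_Hset_iff_hCond n.lt_succ_self hX),
      ncard_hCond_one_add_pow_smul]
    simp [liftCount]
  · obtain ⟨Mt, hMt⟩ := map_toZModPow_surjective n (M : Mat₂ (ZMod (p ^ n)))
    rw [ncard_fiber_castGL (by omega) hMt (fun _ _ hX => mem_Hset_iff_hCond (by omega) hX),
      ncard_hCond_add_pow_smul han ((mem_Hset_iff_hCond han hMt).mp hM)]
    simp [liftCount, not_lt.mpr han.le, han.ne']
end
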